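/- For all Δ ≥ 3 and h ≥ 2, the tree T(Δ,h) in which every vertex has degree Δ or 1 and every leaf is at distance exactly h from the center has order n = (Δ(Δ−1)^h − 2)/(Δ − 2) and satisfies th₊(T(Δ,h)) = h + 1 = 1 + log_{Δ−1}((Δ−2)n + 2)/Δ); hence the lower bound th₊(G) ≥ ⌈1 + log_{Δ−1}(((Δ−2)n + 2)/Δ)⌉ is tight. -/

import Mathlib

open SimpleGraph

/-- Reachability in `G` avoiding the blue set `B` (i.e., within a white component). -/
def offReach {V : Type*} (G : SimpleGraph V) (B : Set V) : V → V → Prop :=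
  Relation.ReflTransGen (fun a b => G.Adj a b ∧ a ∉ B ∧ b ∉ B)

/-- The positive semidefinite color change rule: a blue vertex `v` forces a white vertex `w`
if `w` is the unique white neighbor of `v` in the white component of `w` (together with `B`). -/
def psdForces {V : Type*} (G : SimpleGraph V) (B : Set V) (v w : V) : Prop :=
  v ∈ B ∧ w ∉ B ∧ G.Adj v w ∧
    ∀ u, u ∉ B → G.Adj v u → offReach G B u w → u = w

/-- One round of PSD forcing: perform all possible forces. -/
def psdStep {V : Type*} (G : SimpleGraph V) (B : Set V) : Set V :=
  B ∪ {w | ∃ v, psdForces G B v w}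

/-- `S` is a positive semidefinite zero forcing set. -/
def IsPSDForcingSet {V : Type*} (G : SimpleGraph V) (S : Set V) : Prop :=
  ∃ t, (psdStep G)^[t] S = Set.univ

/-- The PSD propagation time of `S`. -/
noncomputable def psdPt {V : Type*} (G : SimpleGraph V) (S : Set V) : ℕ :=
  sInf {t | (psdStep G)^[t] S = Set.univ}

/-- The PSD throttling number of `G`. -/
noncomputable def psdTh {V : Type*} (G : SimpleGraph V) [Fintype V] : ℕ :=
  sInf {k | ∃ S : Finset V, IsPSDForcingSet G ↑S ∧ k = S.card + psdPt G ↑S}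

/-!
A ball of radius `t` in a connected graph of maximum degree `Δ` has at most
`M(t) = 1 + Δ ∑_{k<t} (Δ-1)^k` vertices (the Moore bound), with equality for the ball of radius
`h` about the centre of `T(Δ,h)`, which is the whole tree. Forces only travel along edges, so a
PSD forcing set `S` with propagation time `t` covers the graph by `|S|` balls of radius `t`, and
`n ≤ |S| M(t)`; since `m M(t) < M(t + m)`, this gives `|S| + t ≥ h + 1`. Conversely, in a tree a
blue vertex forces all of its white neighbours at once, because they lie in different components
of the tree minus that vertex; so the centre alone forces `T(Δ,h)` in `h` rounds. The identity
`(Δ-2) M(h) + 2 = Δ (Δ-1)^h` gives the formula for `n` and the logarithm.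
-/

open Finset

def mooreBound (Δ t : ℕ) : ℕ := 1 + Δ * ∑ k ∈ range t, (Δ - 1) ^ k

section MooreBound

variable {Δ : ℕ}

lemma mooreBound_zero : mooreBound Δ 0 = 1 := by simp [mooreBound]

lemma mooreBound_succ (hΔ : 1 ≤ Δ) (t : ℕ) :
    mooreBound Δ (t + 1) = (Δ - 1) * mooreBound Δ t + 2 := by
  obtain ⟨d, rfl⟩ : ∃ d, Δ = d + 1 := ⟨Δ - 1, by omega⟩
  simp only [mooreBound, sum_range_succ', pow_zero, Nat.add_sub_cancel, pow_succ, ← sum_mul]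
  ring

lemma mooreBound_monotone : Monotone (mooreBound Δ) := fun _ _ hst => by
  unfold mooreBound
  gcongr

lemma sub_two_mul_mooreBound_add_two (hΔ : 2 ≤ Δ) (t : ℕ) :
    (Δ - 2) * mooreBound Δ t + 2 = Δ * (Δ - 1) ^ t := by
  induction t with
  | zero => rw [mooreBound_zero, pow_zero]; omega
  | succ t ih =>
    obtain ⟨d, rfl⟩ : ∃ d, Δ = d + 2 := ⟨Δ - 2, by omega⟩
    rw [mooreBound_succ (by omega), pow_succ]
    simp only [Nat.add_sub_cancel, show d + 2 - 1 = d + 1 by omega] at ih ⊢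
    linear_combination (d + 1) * ih

lemma mooreBound_eq_div (hΔ : 3 ≤ Δ) (t : ℕ) :
    mooreBound Δ t = (Δ * (Δ - 1) ^ t - 2) / (Δ - 2) := by
  have := sub_two_mul_mooreBound_add_two (by omega : 2 ≤ Δ) t
  exact (Nat.div_eq_of_eq_mul_left (by omega) (by rw [← this, mul_comm]; omega)).symm

lemma mul_mooreBound_lt (hΔ : 3 ≤ Δ) (m t : ℕ) :
    m * mooreBound Δ t < mooreBound Δ (t + m) := by
  induction m with
  | zero => simp [mooreBound]
  | succ m ih =>
    have hmono := mooreBound_monotone (Δ := Δ) (Nat.le_add_right t m)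
    rw [← add_assoc, mooreBound_succ (by omega), add_mul, one_mul]
    have h2 : 2 * mooreBound Δ (t + m) ≤ (Δ - 1) * mooreBound Δ (t + m) :=
      Nat.mul_le_mul_right _ (by omega)
    omega

end MooreBound

namespace SimpleGraph

variable {V : Type*} {G : SimpleGraph V} {c : V}

lemma ncard_neighborSet_eq_degree [Fintype V] [DecidableRel G.Adj] (v : V) :
    (G.neighborSet v).ncard = G.degree v := by
  rw [Set.ncard_eq_toFinset_card', ← card_neighborSet_eq_degree, Set.toFinset_card]

lemma dist_le_of_mem_support {u v x : V} (p : G.Walk u v) (hx : x ∈ p.support) :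
    G.dist u x ≤ p.length := by
  classical
  exact (dist_le (p.takeUntil x hx)).trans (p.length_takeUntil_le_length hx)

lemma Connected.exists_adj_dist_add_one (hG : G.Connected) {v : V} (hv : G.dist c v ≠ 0) :
    ∃ u, G.Adj u v ∧ G.dist c u + 1 = G.dist c v := by
  obtain ⟨p, hp⟩ := hG.exists_walk_length_eq_dist v c
  have hnil : ¬ p.Nil := by
    rw [← Walk.length_eq_zero_iff, hp, dist_comm]; exact hv
  refine ⟨p.snd, (p.adj_snd hnil).symm, le_antisymm ?_ ?_⟩
  · have := dist_le p.tail
    have := p.length_tail_add_one hnil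
    rw [dist_comm] at hp ⊢
    omega
  · have := (p.adj_snd hnil).symm.reachable.dist_triangle_right c
    rwa [dist_eq_one_iff_adj.mpr (p.adj_snd hnil).symm] at this

lemma IsTree.existsUnique_adj_dist_add_one (hG : G.IsTree) {v : V} (hv : G.dist c v ≠ 0) :
    ∃! u, G.Adj u v ∧ G.dist c u + 1 = G.dist c v := by
  obtain ⟨p, hp, -⟩ := hG.connected.exists_path_of_dist c v
  have eq_penultimate : ∀ u, G.Adj u v → G.dist c u + 1 = G.dist c v → u = p.penultimate := by
    intro u hu hdu
    obtain ⟨q, hq, hql⟩ := hG.connected.exists_path_of_dist c u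
    have hvq : v ∉ q.support := fun hvq => by
      have := dist_le_of_mem_support q hvq
      omega
    exact hG.isAcyclic.eq_penultimate_of_adj_end hp hu.symm
      (hG.isAcyclic.mem_support_of_ne_mem_support_of_adj_of_isPath hp hq hu.symm hvq)
  obtain ⟨u, hu, hdu⟩ := hG.connected.exists_adj_dist_add_one hv
  exact ⟨u, ⟨hu, hdu⟩, fun w ⟨hw, hdw⟩ => (eq_penultimate w hw hdw).trans
    (eq_penultimate u hu hdu).symm⟩

section Spheres

variable [Fintype V]

variable (G c) in
noncomputable def distSphere (k : ℕ) : Finset V := {v | G.dist c v = k}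

@[simp]
lemma mem_distSphere {k : ℕ} {v : V} : v ∈ G.distSphere c k ↔ G.dist c v = k := by
  simp [distSphere]

lemma Connected.distSphere_zero (hG : G.Connected) : G.distSphere c 0 = {c} := by
  ext v
  rw [mem_distSphere, hG.dist_eq_zero_iff, mem_singleton, eq_comm]

lemma distSphere_one [DecidableRel G.Adj] : G.distSphere c 1 = G.neighborFinset c := by
  ext v
  rw [mem_distSphere, mem_neighborFinset, dist_eq_one_iff_adj]

variable [DecidableEq V] [DecidableRel G.Adj] {Δ k : ℕ}

lemma bipartiteBelow_distSphere_succ_subset {u p : V} (hdp : G.dist c p + 1 = G.dist c u) :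
    (G.distSphere c (G.dist c u + 1)).bipartiteBelow G.Adj u ⊆ (G.neighborFinset u).erase p := by
  intro v hv
  rw [mem_bipartiteBelow, mem_distSphere] at hv
  rw [mem_erase, mem_neighborFinset]
  exact ⟨by rintro rfl; omega, hv.2.symm⟩

lemma IsTree.bipartiteBelow_distSphere_succ (hG : G.IsTree) {u p : V} (hp : G.Adj p u)
    (hdp : G.dist c p + 1 = G.dist c u) :
    (G.distSphere c (G.dist c u + 1)).bipartiteBelow G.Adj u = (G.neighborFinset u).erase p := by
  refine (bipartiteBelow_distSphere_succ_subset hdp).antisymm fun v hv => ?_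
  rw [mem_erase, mem_neighborFinset] at hv
  rw [mem_bipartiteBelow, mem_distSphere]
  refine ⟨(hG.dist_eq_dist_add_one_of_adj c hv.2).resolve_left fun hvu => hv.1 ?_, hv.2.symm⟩
  exact (hG.existsUnique_adj_dist_add_one (by omega)).unique ⟨hv.2.symm, hvu.symm⟩ ⟨hp, hdp⟩

lemma Connected.card_distSphere_succ_le_mul (hG : G.Connected) (hdeg : ∀ v, G.degree v ≤ Δ)
    (hk : k ≠ 0) : #(G.distSphere c (k + 1)) ≤ (Δ - 1) * #(G.distSphere c k) := by
  rw [← mul_one #(G.distSphere c (k + 1)), mul_comm (Δ - 1)]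
  refine card_mul_le_card_mul G.Adj (fun v hv => ?_) fun u hu => ?_
  · rw [mem_distSphere] at hv
    obtain ⟨p, hp, hdp⟩ := hG.exists_adj_dist_add_one (c := c) (v := v) (by omega)
    exact card_pos.mpr
      ⟨p, (mem_bipartiteAbove _).mpr ⟨mem_distSphere.mpr (by omega), hp.symm⟩⟩
  · rw [mem_distSphere] at hu
    obtain ⟨p, hp, hdp⟩ := hG.exists_adj_dist_add_one (c := c) (v := u) (by omega)
    subst hu
    calc _ ≤ #((G.neighborFinset u).erase p) :=
          card_le_card (bipartiteBelow_distSphere_succ_subset hdp)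
      _ = G.degree u - 1 := card_erase_of_mem ((mem_neighborFinset _ _ _).mpr hp.symm)
      _ ≤ Δ - 1 := Nat.sub_le_sub_right (hdeg u) 1

lemma IsTree.card_distSphere_succ_eq_mul (hG : G.IsTree)
    (hdeg : ∀ v ∈ G.distSphere c k, G.degree v = Δ) (hk : k ≠ 0) :
    #(G.distSphere c (k + 1)) = (Δ - 1) * #(G.distSphere c k) := by
  rw [← mul_one #(G.distSphere c (k + 1)), mul_comm (Δ - 1)]
  refine card_mul_eq_card_mul G.Adj (fun v hv => ?_) fun u hu => ?_
  · rw [mem_distSphere] at hv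
    obtain ⟨p, ⟨hp, hdp⟩, huniq⟩ :=
      hG.existsUnique_adj_dist_add_one (c := c) (v := v) (by omega)
    rw [card_eq_one]
    refine ⟨p, Finset.ext fun u => ?_⟩
    rw [mem_bipartiteAbove, mem_distSphere, mem_singleton]
    exact ⟨fun ⟨hdu, hu⟩ => huniq u ⟨hu.symm, by omega⟩,
      by rintro rfl; exact ⟨by omega, hp.symm⟩⟩
  · have hdu := hdeg u hu
    rw [mem_distSphere] at hu
    obtain ⟨p, hp, hdp⟩ := hG.connected.exists_adj_dist_add_one (c := c) (v := u) (by omega)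
    subst hu
    rw [hG.bipartiteBelow_distSphere_succ hp hdp,
      card_erase_of_mem ((mem_neighborFinset _ _ _).mpr hp.symm), card_neighborFinset_eq_degree,
      hdu]

lemma Connected.card_distSphere_succ_le (hG : G.Connected) (hdeg : ∀ v, G.degree v ≤ Δ)
    (k : ℕ) :
    #(G.distSphere c (k + 1)) ≤ Δ * (Δ - 1) ^ k := by
  induction k with
  | zero => simpa [distSphere_one] using hdeg c
  | succ k ih =>
    calc #(G.distSphere c (k + 1 + 1)) ≤ (Δ - 1) * #(G.distSphere c (k + 1)) :=
          hG.card_distSphere_succ_le_mul hdeg k.succ_ne_zero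
      _ ≤ (Δ - 1) * (Δ * (Δ - 1) ^ k) := Nat.mul_le_mul_left _ ih
      _ = Δ * (Δ - 1) ^ (k + 1) := by ring

lemma IsTree.card_distSphere_succ (hG : G.IsTree)
    (hdeg : ∀ v, G.dist c v ≤ k → G.degree v = Δ) :
    #(G.distSphere c (k + 1)) = Δ * (Δ - 1) ^ k := by
  induction k with
  | zero => simpa [distSphere_one] using hdeg c (by simp)
  | succ k ih =>
    rw [hG.card_distSphere_succ_eq_mul (fun v hv => hdeg v (mem_distSphere.mp hv).le)
      k.succ_ne_zero, ih fun v hv => hdeg v (by omega)]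
    ring

lemma Connected.sum_card_distSphere_le_mooreBound (hG : G.Connected)
    (hdeg : ∀ v, G.degree v ≤ Δ) (t : ℕ) :
    ∑ k ∈ range (t + 1), #(G.distSphere c k) ≤ mooreBound Δ t := by
  rw [sum_range_succ', hG.distSphere_zero, card_singleton, mooreBound, mul_sum, add_comm]
  gcongr with k
  exact hG.card_distSphere_succ_le hdeg k

lemma IsTree.sum_card_distSphere_eq_mooreBound (hG : G.IsTree) {t : ℕ}
    (hdeg : ∀ v, G.dist c v < t → G.degree v = Δ) :
    ∑ k ∈ range (t + 1), #(G.distSphere c k) = mooreBound Δ t := by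
  rw [sum_range_succ', hG.connected.distSphere_zero, card_singleton, mooreBound, mul_sum, add_comm]
  refine congrArg _ (sum_congr rfl fun k hk => hG.card_distSphere_succ fun v hv => hdeg v ?_)
  rw [mem_range] at hk
  omega

lemma IsTree.card_eq_mooreBound (hG : G.IsTree) {h : ℕ}
    (hdeg : ∀ v, G.dist c v < h → G.degree v = Δ) (hecc : ∀ v, G.dist c v ≤ h) :
    Fintype.card V = mooreBound Δ h := by
  rw [← hG.sum_card_distSphere_eq_mooreBound hdeg, ← card_univ]
  exact card_eq_sum_card_fiberwise fun v _ => mem_range.mpr (Nat.lt_succ_of_le (hecc v))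

end Spheres

end SimpleGraph

section PSDForcing

variable {V : Type*} {G : SimpleGraph V} {B : Set V}

lemma offReach.exists_walk {u w : V} (h : offReach G B u w) (hu : u ∉ B) :
    ∃ p : G.Walk u w, ∀ x ∈ p.support, x ∉ B := by
  induction h with
  | refl => exact ⟨Walk.nil, by simpa using hu⟩
  | tail _ hstep ih =>
    obtain ⟨p, hp⟩ := ih
    refine ⟨p.concat hstep.1, fun x hx => ?_⟩
    rw [Walk.support_concat, List.mem_append, List.mem_singleton] at hx
    rcases hx with hx | rfl
    exacts [hp x hx, hstep.2.2]

lemma SimpleGraph.IsTree.mem_support_of_adj_of_adj (hG : G.IsTree) {u v w : V} (hu : G.Adj v u)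
    (hw : G.Adj v w) (hne : u ≠ w) (p : G.Walk u w) : v ∈ p.support := by
  classical
  by_contra hv
  have := hG.isAcyclic.mem_support_of_ne_mem_support_of_adj_of_isPath
    (Walk.IsPath.of_adj hu.symm) p.bypass_isPath hw
    (fun h => hv (p.support_bypass_subset_support h))
  simp only [Adj.toWalk, Walk.support_cons, Walk.support_nil, List.mem_cons, List.not_mem_nil,
    or_false] at this
  rcases this with rfl | rfl
  exacts [hne rfl, hw.ne rfl]

lemma SimpleGraph.IsTree.psdForces (hG : G.IsTree) {v w : V} (hv : v ∈ B) (hw : w ∉ B)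
    (hvw : G.Adj v w) : psdForces G B v w := by
  refine ⟨hv, hw, hvw, fun u hu hvu hreach => ?_⟩
  by_contra hne
  obtain ⟨p, hp⟩ := hreach.exists_walk hu
  exact hp v (hG.mem_support_of_adj_of_adj hvu hvw hne p) hv

lemma subset_psdStep : B ⊆ psdStep G B := Set.subset_union_left

lemma iterate_psdStep_subset (i : ℕ) :
    (psdStep G)^[i] B ⊆ {x | ∃ s ∈ B, G.dist s x ≤ i} := by
  induction i with
  | zero => exact fun x hx => ⟨x, hx, by simp⟩
  | succ i ih =>
    rw [Function.iterate_succ_apply']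
    rintro x (hx | ⟨v, hv, -, hvx, -⟩)
    · obtain ⟨s, hs, hd⟩ := ih hx
      exact ⟨s, hs, by omega⟩
    · obtain ⟨s, hs, hd⟩ := ih hv
      have := hvx.reachable.dist_triangle_right s
      rw [dist_eq_one_iff_adj.mpr hvx] at this
      exact ⟨s, hs, by omega⟩

lemma SimpleGraph.IsTree.setOf_dist_le_subset_iterate_psdStep (hG : G.IsTree) (c : V) (i : ℕ) :
    {v | G.dist c v ≤ i} ⊆ (psdStep G)^[i] {c} := by
  induction i with
  | zero =>
    intro v (hv : G.dist c v ≤ 0)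
    rw [Nat.le_zero, hG.connected.dist_eq_zero_iff] at hv
    exact hv.symm
  | succ i ih =>
    intro w (hw : G.dist c w ≤ i + 1)
    rw [Function.iterate_succ_apply']
    by_cases hwi : G.dist c w ≤ i
    · exact subset_psdStep (ih hwi)
    by_cases hwB : w ∈ (psdStep G)^[i] {c}
    · exact subset_psdStep hwB
    obtain ⟨v, hvw, hdv⟩ := hG.connected.exists_adj_dist_add_one (c := c) (v := w) (by omega)
    exact Or.inr ⟨v, hG.psdForces (ih (show G.dist c v ≤ i by omega)) hwB hvw⟩

lemma psdTh_le [Fintype V] {S : Finset V} {t : ℕ} (ht : (psdStep G)^[t] ↑S = Set.univ) :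
    psdTh G ≤ #S + t :=
  calc psdTh G ≤ #S + psdPt G ↑S := Nat.sInf_le ⟨S, ⟨t, ht⟩, rfl⟩
    _ ≤ #S + t := Nat.add_le_add_left (Nat.sInf_le ht) _

variable [Fintype V] [DecidableRel G.Adj] {Δ : ℕ}

lemma SimpleGraph.Connected.card_le_card_mul_mooreBound (hG : G.Connected)
    (hdeg : ∀ v, G.degree v ≤ Δ) {S : Finset V} {t : ℕ}
    (ht : (psdStep G)^[t] ↑S = Set.univ) :
    Fintype.card V ≤ #S * mooreBound Δ t := by
  classical
  have hcover :
      (univ : Finset V) ⊆ S.biUnion fun s => (range (t + 1)).biUnion (G.distSphere s) := by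
    intro x _
    obtain ⟨s, hs, hd⟩ := iterate_psdStep_subset t (ht ▸ Set.mem_univ x)
    simp only [mem_biUnion, mem_range, mem_distSphere]
    exact ⟨s, hs, G.dist s x, by omega, rfl⟩
  calc Fintype.card V ≤ #(S.biUnion fun s => (range (t + 1)).biUnion (G.distSphere s)) :=
        card_le_card hcover
    _ ≤ ∑ s ∈ S, #((range (t + 1)).biUnion (G.distSphere s)) := card_biUnion_le
    _ ≤ ∑ _s ∈ S, mooreBound Δ t :=
        sum_le_sum fun s _ => card_biUnion_le.trans (hG.sum_card_distSphere_le_mooreBound hdeg t)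
    _ = #S * mooreBound Δ t := by rw [sum_const, smul_eq_mul]

lemma SimpleGraph.Connected.le_psdTh (hG : G.Connected) (hΔ : 3 ≤ Δ)
    (hdeg : ∀ v, G.degree v ≤ Δ) {h : ℕ} (hn : mooreBound Δ h ≤ Fintype.card V) :
    h + 1 ≤ psdTh G := by
  refine le_csInf ⟨_, univ, ⟨0, by simp⟩, rfl⟩ ?_
  rintro _ ⟨S, hS, rfl⟩
  by_contra! hlt
  have hcard := hG.card_le_card_mul_mooreBound hdeg (t := psdPt G ↑S) (Nat.sInf_mem hS)
  have := mooreBound_monotone (Δ := Δ) (show psdPt G ↑S + #S ≤ h by omega)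
  have := mul_mooreBound_lt hΔ #S (psdPt G ↑S)
  omega

end PSDForcing

lemma logb_sub_two_mul_mooreBound_add_two_div {Δ : ℕ} (hΔ : 3 ≤ Δ) (t : ℕ) :
    Real.logb ((Δ : ℝ) - 1) ((((Δ : ℝ) - 2) * mooreBound Δ t + 2) / Δ) = t := by
  have hΔ' : (3 : ℝ) ≤ Δ := by exact_mod_cast hΔ
  have hcast :=
    congrArg (Nat.cast : ℕ → ℝ) (sub_two_mul_mooreBound_add_two (by omega : 2 ≤ Δ) t)
  push_cast [Nat.cast_sub (by omega : 2 ≤ Δ), Nat.cast_sub (by omega : 1 ≤ Δ)] at hcast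
  rw [hcast, mul_div_cancel_left₀ _ (by positivity), Real.logb_pow,
    Real.logb_self_eq_one (by linarith), mul_one]

theorem stmt_15_general {V : Type*} [Fintype V] (T : SimpleGraph V) (hT : T.IsTree)
    (Δ h : ℕ) (hΔ : 3 ≤ Δ) (c : V)
    (hdeg : ∀ v, (T.neighborSet v).ncard = Δ ∨ (T.neighborSet v).ncard = 1)
    (hleaf : ∀ v, (T.neighborSet v).ncard = 1 ↔ T.dist c v = h)
    (hecc : ∀ v, T.dist c v ≤ h) :
    Fintype.card V = (Δ * (Δ - 1) ^ h - 2) / (Δ - 2) ∧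
    psdTh T = h + 1 ∧
    ((h : ℝ) + 1 = 1 + Real.logb ((Δ : ℝ) - 1)
      ((((Δ : ℝ) - 2) * Fintype.card V + 2) / (Δ : ℝ))) := by
  classical
  simp only [ncard_neighborSet_eq_degree] at hdeg hleaf
  have hinterior : ∀ v, T.dist c v < h → T.degree v = Δ := fun v hv =>
    (hdeg v).resolve_right fun h1 => hv.ne ((hleaf v).mp h1)
  have hcard : Fintype.card V = mooreBound Δ h := hT.card_eq_mooreBound hinterior hecc
  have hforced : (psdStep T)^[h] ↑({c} : Finset V) = Set.univ := by
    rw [coe_singleton, Set.eq_univ_iff_forall]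
    exact fun v => hT.setOf_dist_le_subset_iterate_psdStep c h (hecc v)
  refine ⟨hcard.trans (mooreBound_eq_div hΔ h), le_antisymm ?_ ?_, ?_⟩
  · simpa [add_comm] using psdTh_le hforced
  · exact hT.connected.le_psdTh hΔ (fun v => by rcases hdeg v with h' | h' <;> omega) hcard.ge
  · rw [hcard, logb_sub_two_mul_mooreBound_add_two_div hΔ, add_comm]

theorem stmt_15 {V : Type*} [Fintype V] (T : SimpleGraph V) (hT : T.IsTree)
    (Δ h : ℕ) (hΔ : 3 ≤ Δ) (hh : 2 ≤ h) (c : V)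
    (hdeg : ∀ v, (T.neighborSet v).ncard = Δ ∨ (T.neighborSet v).ncard = 1)
    (hleaf : ∀ v, (T.neighborSet v).ncard = 1 ↔ T.dist c v = h)
    (hecc : ∀ v, T.dist c v ≤ h) :
    Fintype.card V = (Δ * (Δ - 1) ^ h - 2) / (Δ - 2) ∧
    psdTh T = h + 1 ∧
    ((h : ℝ) + 1 = 1 + Real.logb ((Δ : ℝ) - 1)
      ((((Δ : ℝ) - 2) * Fintype.card V + 2) / (Δ : ℝ))) :=
  stmt_15_general T hT Δ h hΔ c hdeg hleaf hecc
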